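/- (Partition-based pruning is optimality preserving) Let Π = ⟨P, A, I, G⟩ be a STRIPS planning problem with nonnegative action costs, and let A = A_1 ⊎ ... ⊎ A_n be an arbitrary partition of its actions into disjoint sets, with private and public propositions and actions defined with respect to this partition as in MA-STRIPS. Assume every proposition in G is public. If Π has an optimal solution of cost c, then Π has a solution of cost c that survives partition-based pruning, i.e., a solution in which every action that immediately follows a private action belonging to some A_i itself belongs to A_i. -/

import Mathlib

/-- A STRIPS action over a set of propositions `P`. -/
structure StripsAction (P : Type*) where
  pre : Set P
  add : Set P
  del : Set P

namespace StripsAction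

variable {P : Type*}

/-- The variable set of an action: all propositions it mentions. -/
def varset (a : StripsAction P) : Set P := a.pre ∪ a.add ∪ a.del

/-- An action is applicable in state `s` iff its preconditions hold in `s`. -/
def Applicable (a : StripsAction P) (s : Set P) : Prop := a.pre ⊆ s

/-- Applying an action to a state: `a(s) = (s \ del(a)) ∪ add(a)`. -/
def apply (a : StripsAction P) (s : Set P) : Set P := (s \ a.del) ∪ a.add

end StripsAction

/-- The state obtained by applying a sequence of actions in order. -/
def applySeq {P : Type*} : List (StripsAction P) → Set P → Set P
  | [], s => s
  | a :: rest, s => applySeq rest (a.apply s)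

/-- A sequence of actions is a legal plan from `s` iff each action is applicable in the
state obtained by applying the previous ones in order. -/
def LegalPlan {P : Type*} : List (StripsAction P) → Set P → Prop
  | [], _ => True
  | a :: rest, s => a.Applicable s ∧ LegalPlan rest (a.apply s)

/-- An MA-STRIPS problem: pairwise-disjoint finite action sets `A i` (one per agent),
an initial state and a goal. -/
structure MAProblem (P Ag : Type*) where
  A : Ag → Set (StripsAction P)
  disjoint : ∀ i j : Ag, i ≠ j → Disjoint (A i) (A j)
  finite : ∀ i : Ag, (A i).Finite
  I : Set P
  G : Set P

namespace MAProblem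

variable {P Ag : Type*}

/-- Proposition `p` is private to agent `i` iff every action mentioning `p` belongs to
`A i`. -/
def PrivateProp (pb : MAProblem P Ag) (p : P) (i : Ag) : Prop :=
  ∀ j : Ag, ∀ a ∈ pb.A j, p ∈ a.varset → j = i

/-- An action `a ∈ A i` is private iff every proposition it mentions is private to `i`. -/
def PrivateAction (pb : MAProblem P Ag) (a : StripsAction P) (i : Ag) : Prop :=
  a ∈ pb.A i ∧ ∀ p ∈ a.varset, pb.PrivateProp p i

/-- An action of the problem is public iff it is not private. -/
def PublicAction (pb : MAProblem P Ag) (a : StripsAction P) : Prop :=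
  (∃ i, a ∈ pb.A i) ∧ ∀ i : Ag, ¬ pb.PrivateAction a i

end MAProblem

/-- The cost of a plan is the sum of the costs of its actions. -/
def planCost {P : Type*} (cost : StripsAction P → ℝ) (L : List (StripsAction P)) : ℝ :=
  (L.map cost).sum

/-- A solution of an MA-STRIPS problem: a legal plan from `I`, built from the agents'
actions, whose final state contains the goal. -/
def Solution {P Ag : Type*} (pb : MAProblem P Ag) (L : List (StripsAction P)) : Prop :=
  (∀ x ∈ L, ∃ k, x ∈ pb.A k) ∧ LegalPlan L pb.I ∧ pb.G ⊆ applySeq L pb.I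

/-- A solution is optimal iff no solution has strictly smaller cost. -/
def OptimalSolution {P Ag : Type*} (pb : MAProblem P Ag) (cost : StripsAction P → ℝ)
    (L : List (StripsAction P)) : Prop :=
  Solution pb L ∧ ∀ L' : List (StripsAction P), Solution pb L' →
    planCost cost L ≤ planCost cost L'

/-- A plan survives partition-based pruning iff every action that immediately follows a
private action belonging to some `A i` itself belongs to `A i`. -/
def SurvivesPruning {P Ag : Type*} (pb : MAProblem P Ag) (L : List (StripsAction P)) : Prop :=
  ∀ (k : ℕ) (hk : k + 1 < L.length) (i : Ag),
    pb.PrivateAction (L.get ⟨k, Nat.lt_of_succ_lt hk⟩) i → L.get ⟨k + 1, hk⟩ ∈ pb.A i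

/-!
A private action of agent `i` mentions only propositions that no other agent mentions, so it
commutes with every action of the other agents. Working from the end of the plan, each private
action of `i` is postponed past the actions of other agents to just before the next action of `i`,
and dropped if `i` never acts again. The new plan is legal, agrees with the old one on all public
propositions (hence reaches the goal) and is a permutation of a sublist of it, so with nonnegative
costs it costs no more; optimality forces equal cost.
-/

theorem List.exists_eq_append_cons_of_exists_mem {α : Type*} {p : α → Prop} :
    ∀ {l : List α}, (∃ x ∈ l, p x) → ∃ U b V, l = U ++ b :: V ∧ p b ∧ ∀ x ∈ U, ¬ p x
  | [], h => by simp at h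
  | a :: l, h => by
    by_cases ha : p a
    · exact ⟨[], a, l, rfl, ha, by simp⟩
    obtain ⟨x, hx, hpx⟩ := h
    obtain ⟨U, b, V, rfl, hb, hU⟩ :=
      exists_eq_append_cons_of_exists_mem ⟨x, (List.mem_cons.mp hx).resolve_left fun h => ha (h ▸ hpx), hpx⟩
    exact ⟨a :: U, b, V, rfl, hb, List.forall_mem_cons.mpr ⟨ha, hU⟩⟩

namespace StripsAction

variable {P : Type*}

theorem mem_apply_of_notMem_varset {a : StripsAction P} {s : Set P} {p : P}
    (hp : p ∉ a.varset) : p ∈ a.apply s ↔ p ∈ s := by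
  simp only [varset, Set.mem_union, not_or] at hp
  simp [apply, hp.1.2, hp.2]

theorem apply_comm {a b : StripsAction P} (h : Disjoint a.varset b.varset) (s : Set P) :
    a.apply (b.apply s) = b.apply (a.apply s) := by
  ext p
  have hp : p ∈ a.varset → p ∉ b.varset := fun hp => Set.disjoint_left.mp h hp
  simp only [varset, Set.mem_union] at hp
  simp only [apply, Set.mem_union, Set.mem_sdiff]
  tauto

theorem applicable_apply_iff {a b : StripsAction P} (h : Disjoint a.varset b.varset)
    (s : Set P) : b.Applicable (a.apply s) ↔ b.Applicable s := by
  refine forall₂_congr fun p hp => mem_apply_of_notMem_varset fun hpa => ?_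
  exact Set.disjoint_left.mp h hpa (Or.inl (Or.inl hp))

end StripsAction

open StripsAction

section Plans

variable {P : Type*}

theorem applySeq_append (L M : List (StripsAction P)) (s : Set P) :
    applySeq (L ++ M) s = applySeq M (applySeq L s) := by
  induction L generalizing s with
  | nil => rfl
  | cons a L ih => exact ih _

theorem legalPlan_append (L M : List (StripsAction P)) (s : Set P) :
    LegalPlan (L ++ M) s ↔ LegalPlan L s ∧ LegalPlan M (applySeq L s) := by
  induction L generalizing s with
  | nil => simp [LegalPlan, applySeq]
  | cons a L ih => simp only [List.cons_append, LegalPlan, applySeq, ih, and_assoc]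

theorem apply_applySeq_comm {a : StripsAction P} {U : List (StripsAction P)}
    (hU : ∀ x ∈ U, Disjoint a.varset x.varset) (s : Set P) :
    a.apply (applySeq U s) = applySeq U (a.apply s) := by
  induction U generalizing s with
  | nil => rfl
  | cons x U ih =>
    simp only [List.forall_mem_cons] at hU
    simp only [applySeq, ih hU.2, apply_comm hU.1]

theorem legalPlan_apply_iff {a : StripsAction P} {U : List (StripsAction P)}
    (hU : ∀ x ∈ U, Disjoint a.varset x.varset) (s : Set P) :
    LegalPlan U (a.apply s) ↔ LegalPlan U s := by
  induction U generalizing s with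
  | nil => rfl
  | cons x U ih =>
    simp only [List.forall_mem_cons] at hU
    simp only [LegalPlan, applicable_apply_iff hU.1, ← apply_comm hU.1, ih hU.2]

theorem applicable_applySeq_iff {a : StripsAction P} {U : List (StripsAction P)}
    (hU : ∀ x ∈ U, Disjoint a.varset x.varset) (s : Set P) :
    a.Applicable (applySeq U s) ↔ a.Applicable s := by
  induction U generalizing s with
  | nil => rfl
  | cons x U ih =>
    simp only [List.forall_mem_cons] at hU
    exact (ih hU.2 _).trans (applicable_apply_iff hU.1.symm s)

theorem applySeq_append_cons_of_disjoint {a : StripsAction P} {U : List (StripsAction P)}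
    (hU : ∀ x ∈ U, Disjoint a.varset x.varset) (W : List (StripsAction P)) (s : Set P) :
    applySeq (U ++ a :: W) s = applySeq (U ++ W) (a.apply s) := by
  simp only [applySeq_append, applySeq, apply_applySeq_comm hU]

theorem legalPlan_append_cons_of_disjoint {a : StripsAction P} {U : List (StripsAction P)}
    (hU : ∀ x ∈ U, Disjoint a.varset x.varset) {W : List (StripsAction P)} {s : Set P}
    (ha : a.Applicable s) (hUW : LegalPlan (U ++ W) (a.apply s)) :
    LegalPlan (U ++ a :: W) s := by
  rw [legalPlan_append] at hUW ⊢
  refine ⟨(legalPlan_apply_iff hU s).mp hUW.1, ?_, ?_⟩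
  · exact (applicable_applySeq_iff hU s).mpr ha
  · rw [apply_applySeq_comm hU]; exact hUW.2

theorem planCost_le_of_subperm {cost : StripsAction P → ℝ} (hcost : ∀ a, 0 ≤ cost a)
    {T L : List (StripsAction P)} (h : T.Subperm L) : planCost cost T ≤ planCost cost L := by
  obtain ⟨l, hperm, hsub⟩ := h
  rw [planCost, ← (hperm.map cost).sum_eq]
  exact (hsub.map cost).sum_le_sum (by simp [hcost])

end Plans

namespace MAProblem

variable {P Ag : Type*} (pb : MAProblem P Ag)

def PublicProp (p : P) : Prop := ∀ i, ¬ pb.PrivateProp p i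

def SurvivesAfter (a b : StripsAction P) : Prop := ∀ i, pb.PrivateAction a i → b ∈ pb.A i

variable {pb}

theorem eq_of_mem_A {x : StripsAction P} {i j : Ag} (hi : x ∈ pb.A i) (hj : x ∈ pb.A j) :
    i = j := by
  by_contra hij
  exact Set.disjoint_left.mp (pb.disjoint i j hij) hi hj

theorem survivesAfter_of_forall_not_privateAction {a : StripsAction P}
    (ha : ∀ i, ¬ pb.PrivateAction a i) (b : StripsAction P) : pb.SurvivesAfter a b :=
  fun i hi => absurd hi (ha i)

namespace PrivateAction

variable {a : StripsAction P} {i : Ag}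

theorem survivesAfter (ha : pb.PrivateAction a i) {b : StripsAction P} (hb : b ∈ pb.A i) :
    pb.SurvivesAfter a b :=
  fun _ hj => eq_of_mem_A ha.1 hj.1 ▸ hb

theorem disjoint_varset (ha : pb.PrivateAction a i) {x : StripsAction P} {k : Ag}
    (hx : x ∈ pb.A k) (hxi : x ∉ pb.A i) : Disjoint a.varset x.varset :=
  Set.disjoint_left.mpr fun p hpa hpx => hxi (ha.2 p hpa k x hx hpx ▸ hx)

theorem notMem_varset (ha : pb.PrivateAction a i) {p : P} (hp : pb.PublicProp p) :
    p ∉ a.varset :=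
  fun hpa => hp i (ha.2 p hpa)

end PrivateAction

end MAProblem

open MAProblem

theorem survivesPruning_iff_isChain {P Ag : Type*} (pb : MAProblem P Ag)
    (L : List (StripsAction P)) : SurvivesPruning pb L ↔ L.IsChain pb.SurvivesAfter := by
  rw [List.isChain_iff_getElem]
  rfl

section Pruning

variable {P Ag : Type*} {pb : MAProblem P Ag}

theorem MAProblem.PrivateAction.exists_plan_of_cons {a : StripsAction P} {i : Ag}
    (ha : pb.PrivateAction a i) {T : List (StripsAction P)} {s : Set P}
    (hmem : ∀ x ∈ T, ∃ k, x ∈ pb.A k) (happ : a.Applicable s)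
    (hleg : LegalPlan T (a.apply s)) (hchain : T.IsChain pb.SurvivesAfter) :
    ∃ T' : List (StripsAction P), T'.Subperm (a :: T) ∧ LegalPlan T' s ∧
      T'.IsChain pb.SurvivesAfter ∧
      ∀ p, pb.PublicProp p → (p ∈ applySeq T' s ↔ p ∈ applySeq T (a.apply s)) := by
  by_cases hex : ∃ x ∈ T, x ∈ pb.A i
  · obtain ⟨U, b, V, rfl, hb, hU⟩ := List.exists_eq_append_cons_of_exists_mem hex
    have hdisj : ∀ x ∈ U, Disjoint a.varset x.varset := fun x hx =>
      let ⟨_, hk⟩ := hmem x (by simp [hx])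
      ha.disjoint_varset hk (hU x hx)
    refine ⟨U ++ a :: b :: V, List.perm_middle.subperm,
      legalPlan_append_cons_of_disjoint hdisj happ hleg, ?_,
      fun p _ => by rw [applySeq_append_cons_of_disjoint hdisj]⟩
    obtain ⟨hchainU, hchainbV, hlast⟩ := List.isChain_append.mp hchain
    refine List.isChain_append.mpr ⟨hchainU, List.isChain_cons_cons.mpr ⟨ha.survivesAfter hb,
      hchainbV⟩, fun x hx _ _ j hxj => ?_⟩
    have hij : i = j := eq_of_mem_A hb (hlast x hx b rfl j hxj)
    exact absurd (hij ▸ hxj.1) (hU x (List.mem_of_mem_getLast? hx))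
  · push Not at hex
    have hdisj : ∀ x ∈ T, Disjoint a.varset x.varset := fun x hx =>
      let ⟨_, hk⟩ := hmem x hx
      ha.disjoint_varset hk (hex x hx)
    refine ⟨T, (List.sublist_cons_self a T).subperm, (legalPlan_apply_iff hdisj s).mp hleg,
      hchain, fun p hp => ?_⟩
    rw [← apply_applySeq_comm hdisj, mem_apply_of_notMem_varset (ha.notMem_varset hp)]

theorem exists_subperm_plan_isChain_survivesAfter {L : List (StripsAction P)} {s : Set P}
    (hmem : ∀ x ∈ L, ∃ k, x ∈ pb.A k) (hleg : LegalPlan L s) :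
    ∃ T : List (StripsAction P), T.Subperm L ∧ LegalPlan T s ∧
      T.IsChain pb.SurvivesAfter ∧
      ∀ p, pb.PublicProp p → (p ∈ applySeq T s ↔ p ∈ applySeq L s) := by
  induction L generalizing s with
  | nil => exact ⟨[], List.Subperm.refl _, trivial, List.IsChain.nil, fun _ _ => Iff.rfl⟩
  | cons a L ih =>
    obtain ⟨happ, hleg⟩ := hleg
    rw [List.forall_mem_cons] at hmem
    obtain ⟨T, hsub, hlegT, hchain, hpub⟩ := ih hmem.2 hleg
    by_cases hpriv : ∃ i, pb.PrivateAction a i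
    · obtain ⟨i, ha⟩ := hpriv
      obtain ⟨T', hsub', hleg', hchain', hpub'⟩ :=
        ha.exists_plan_of_cons (fun x hx => hmem.2 x (hsub.subset hx)) happ hlegT hchain
      exact ⟨T', hsub'.trans ((List.subperm_cons a).mpr hsub), hleg', hchain',
        fun p hp => (hpub' p hp).trans (hpub p hp)⟩
    · push Not at hpriv
      exact ⟨a :: T, (List.subperm_cons a).mpr hsub, ⟨happ, hlegT⟩,
        List.isChain_cons.mpr ⟨fun b _ => survivesAfter_of_forall_not_privateAction hpriv b,
          hchain⟩, hpub⟩

end Pruning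

theorem pb_pruning_optimality_preserving_general {P Ag : Type*}
    (pb : MAProblem P Ag) (cost : StripsAction P → ℝ)
    (hcost : ∀ a : StripsAction P, 0 ≤ cost a)
    (hG : ∀ p ∈ pb.G, ∀ i : Ag, ¬ pb.PrivateProp p i)
    (c : ℝ) (L : List (StripsAction P))
    (hopt : OptimalSolution pb cost L) (hc : planCost cost L = c) :
    ∃ L' : List (StripsAction P), Solution pb L' ∧ planCost cost L' = c ∧
      SurvivesPruning pb L' := by
  obtain ⟨⟨hmem, hleg, hgoal⟩, hmin⟩ := hopt
  obtain ⟨T, hsub, hlegT, hchain, hpub⟩ := exists_subperm_plan_isChain_survivesAfter hmem hleg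
  have hsol : Solution pb T :=
    ⟨fun x hx => hmem x (hsub.subset hx), hlegT, fun p hp => (hpub p (hG p hp)).mpr (hgoal hp)⟩
  refine ⟨T, hsol, ?_, (survivesPruning_iff_isChain pb T).mpr hchain⟩
  exact hc ▸ le_antisymm (planCost_le_of_subperm hcost hsub) (hmin T hsol)

/-- partition-based pruning is optimality preserving: for a STRIPS problem
whose (finite) action set is partitioned into disjoint sets `A i` (modelled by
`MAProblem` with a finite index type), with nonnegative action costs and a goal made of
public propositions only: if there is an optimal solution of cost `c`, then there is a
solution of cost `c` that survives partition-based pruning. -/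
theorem pb_pruning_optimality_preserving {P Ag : Type*} [Finite P] [Finite Ag]
    (pb : MAProblem P Ag) (cost : StripsAction P → ℝ)
    (hcost : ∀ a : StripsAction P, 0 ≤ cost a)
    (hG : ∀ p ∈ pb.G, ∀ i : Ag, ¬ pb.PrivateProp p i)
    (c : ℝ) (L : List (StripsAction P))
    (hopt : OptimalSolution pb cost L) (hc : planCost cost L = c) :
    ∃ L' : List (StripsAction P), Solution pb L' ∧ planCost cost L' = c ∧
      SurvivesPruning pb L' :=
  pb_pruning_optimality_preserving_general pb cost hcost hG c L hopt hc
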